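/- arXiv:math/0506450 — 3 statements merged into one kernel-verified Lean document; each statement's English description precedes it below -/
import Mathlib

section
/- For vectors v, w in R^3 and r on the unit sphere, the Lie bracket of the vector fields X[v](r) = v - r⟨v,r⟩ and X[w](r) = w - r⟨w,r⟩ satisfies [X[v], X[w]](r) = (v × w) × r = Y[v × w](r) for all r with |r| = 1. -/
open Matrix

/-- Lie bracket of vector fields on ℝ³: `[X,Y](r) = DY(r)·X(r) - DX(r)·Y(r)`. -/
noncomputable def vfBracket (X Y : (Fin 3 → ℝ) → (Fin 3 → ℝ)) (r : Fin 3 → ℝ) : Fin 3 → ℝ :=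
  fderiv ℝ Y r (X r) - fderiv ℝ X r (Y r)

/-- The boost vector field `X[v](r) = v - r⟨v,r⟩`. -/
def Xfield (v : Fin 3 → ℝ) : (Fin 3 → ℝ) → (Fin 3 → ℝ) := fun r => v - (v ⬝ᵥ r) • r

/-- The rotational vector field `Y[v](r) = v × r`. -/
def Yfield (v : Fin 3 → ℝ) : (Fin 3 → ℝ) → (Fin 3 → ℝ) := fun r => crossProduct v r

/-! Differentiating gives `DX[v](r) u = -(⟨v,r⟩ u + ⟨v,u⟩ r)`. In the bracket the terms along `r`
cancel by the symmetry of `⟨,⟩`, leaving `⟨v,r⟩ w - ⟨w,r⟩ v`, which is the expansion of the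
triple product `(v × w) × r`. -/

theorem hasFDerivAt_const_sub_smul_self {𝕜 E : Type*} [NontriviallyNormedField 𝕜]
    [NormedAddCommGroup E] [NormedSpace 𝕜 E] (φ : E →L[𝕜] 𝕜) (v x : E) :
    HasFDerivAt (fun y => v - φ y • y) (-(φ x • ContinuousLinearMap.id 𝕜 E + φ.smulRight x)) x :=
  (φ.hasFDerivAt.smul (hasFDerivAt_id x)).const_sub v

theorem fderiv_Xfield_apply (v r u : Fin 3 → ℝ) :
    fderiv ℝ (Xfield v) r u = -((v ⬝ᵥ r) • u + (v ⬝ᵥ u) • r) := by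
  have h : HasFDerivAt (Xfield v) _ r :=
    hasFDerivAt_const_sub_smul_self (dotProductBilin ℝ ℝ v).toContinuousLinearMap v r
  rw [h.fderiv]
  rfl

theorem vfBracket_Xfield (v w r : Fin 3 → ℝ) :
    vfBracket (Xfield v) (Xfield w) r = (v ⬝ᵥ r) • w - (w ⬝ᵥ r) • v := by
  simp only [vfBracket, fderiv_Xfield_apply, Xfield, dotProduct_sub, dotProduct_smul, smul_eq_mul,
    dotProduct_comm w v]
  module

theorem stmt1_general (v w r : Fin 3 → ℝ) :
    vfBracket (Xfield v) (Xfield w) r = crossProduct (crossProduct v w) r ∧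
    vfBracket (Xfield v) (Xfield w) r = Yfield (crossProduct v w) r := by
  rw [vfBracket_Xfield, Yfield, cross_cross_eq_smul_sub_smul, and_self]

theorem stmt1 (v w r : Fin 3 → ℝ) (hr : r ⬝ᵥ r = 1) :
    vfBracket (Xfield v) (Xfield w) r = crossProduct (crossProduct v w) r ∧
    vfBracket (Xfield v) (Xfield w) r = Yfield (crossProduct v w) r :=
  stmt1_general v w r
end

section
/- Let H be a Hopf algebra and G = Σ X⊗Y ∈ H⊗H with all X, Y primitive. Setting F^{-1} = 1⊗1 + ℏG + (ℏ²/2)G² and F its inverse to order ℏ², the associator φ = (1⊗F)(id⊗Δ)F(Δ⊗id)F^{-1}(F⊗1)^{-1} satisfies φ = 1⊗1⊗1 + (ℏ²/2)([X,X̃]⊗Ỹ⊗Y + 2 X̃⊗[X,Ỹ]⊗Y - X⊗X̃⊗[Y,Ỹ]) + O(ℏ³), where tildes denote a second independent copy of the summation in G. -/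
open TensorProduct Polynomial


lemma coeff1_mul' {R} [Semiring R] (p q : R[X]) :
    (p*q).coeff 1 = p.coeff 0 * q.coeff 1 + p.coeff 1 * q.coeff 0 := by
  rw [coeff_mul, Finset.Nat.sum_antidiagonal_eq_sum_range_succ_mk]
  simp [Finset.sum_range_succ]

lemma coeff2_mul' {R} [Semiring R] (p q : R[X]) :
    (p*q).coeff 2 = p.coeff 0 * q.coeff 2 + p.coeff 1 * q.coeff 1 + p.coeff 2 * q.coeff 0 := by
  rw [coeff_mul, Finset.Nat.sum_antidiagonal_eq_sum_range_succ_mk]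
  simp [Finset.sum_range_succ, add_assoc]

lemma key_id {K A : Type*} [Field K] [CharZero K] [Ring A] [Module K A] (a b c : A) :
    ((1:K)/2) • (c * c) + (a + b + (-(c + a) + -b)) * c +
      (((1:K)/2) • ((a + b) * (a + b)) + (-(c + a) + -b) * (a + b) +
        (((1:K)/2) • ((c + a) * (c + a)) + -b * -(c + a) + ((1:K)/2) • (b * b))) =
    ((1:K)/2)•(a*c) - ((1:K)/2)•(c*a) - ((1:K)/2)•(a*b) + ((1:K)/2)•(b*a) + (b*c - c*b) := by
  simp only [mul_add, add_mul, neg_mul, mul_neg, neg_neg, smul_add]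
  match_scalars <;> norm_num

set_option maxHeartbeats 1600000 in

/-- Let `G = Σ X_i ⊗ Y_i ∈ H⊗H` with all `X_i, Y_i` primitive. With
`F⁻¹ = 1 + ℏG + (ℏ²/2)G²` and `F = 1 - ℏG + (ℏ²/2)G²` (its inverse to order ℏ²),
the associator `φ = (1⊗F)·(id⊗Δ)F·(Δ⊗id)F⁻¹·(F⁻¹⊗1)` satisfies
`φ = 1⊗1⊗1 + (ℏ²/2)([X,X̃]⊗Ỹ⊗Y + 2X̃⊗[X,Ỹ]⊗Y - X⊗X̃⊗[Y,Ỹ]) + O(ℏ³)`,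
stated as identities of the coefficients of `ℏ⁰, ℏ¹, ℏ²` where `ℏ` is a formal
(polynomial) variable. -/
theorem stmt8 {K H : Type*} [Field K] [CharZero K] [Ring H] [Bialgebra K H]
    {ι : Type*} (s : Finset ι) (X Y : ι → H)
    (hX : ∀ i ∈ s, Coalgebra.comul (R := K) (X i) = X i ⊗ₜ[K] (1 : H) + (1 : H) ⊗ₜ[K] X i)
    (hY : ∀ i ∈ s, Coalgebra.comul (R := K) (Y i) = Y i ⊗ₜ[K] (1 : H) + (1 : H) ⊗ₜ[K] Y i)
    (G : H ⊗[K] H) (hG : G = ∑ i ∈ s, X i ⊗ₜ[K] Y i)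
    (Finv F : Polynomial (H ⊗[K] H))
    (hFinv : Finv = 1 + Polynomial.C G * Polynomial.X
        + Polynomial.C (((1 : K)/2) • (G * G)) * Polynomial.X ^ 2)
    (hF : F = 1 - Polynomial.C G * Polynomial.X
        + Polynomial.C (((1 : K)/2) • (G * G)) * Polynomial.X ^ 2)
    (φ : Polynomial ((H ⊗[K] H) ⊗[K] H))
    (hφ : φ =
      -- (1 ⊗ F)
      Polynomial.map ((AlgEquiv.toAlgHom (Algebra.TensorProduct.assoc K K K H H H).symm).comp
          (Algebra.TensorProduct.includeRight (R := K) (A := H) (B := H ⊗[K] H)) :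
            (H ⊗[K] H) →+* (H ⊗[K] H) ⊗[K] H) F
      -- (id ⊗ Δ) F
      * Polynomial.map ((AlgEquiv.toAlgHom (Algebra.TensorProduct.assoc K K K H H H).symm).comp
          (Algebra.TensorProduct.map (AlgHom.id K H) (Bialgebra.comulAlgHom K H)) :
            (H ⊗[K] H) →+* (H ⊗[K] H) ⊗[K] H) F
      -- (Δ ⊗ id) F⁻¹
      * Polynomial.map ((Algebra.TensorProduct.map (Bialgebra.comulAlgHom K H) (AlgHom.id K H)) :
            (H ⊗[K] H) →+* (H ⊗[K] H) ⊗[K] H) Finv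
      -- (F ⊗ 1)⁻¹ = F⁻¹ ⊗ 1
      * Polynomial.map ((Algebra.TensorProduct.includeLeft :
            (H ⊗[K] H) →ₐ[K] (H ⊗[K] H) ⊗[K] H) : (H ⊗[K] H) →+* (H ⊗[K] H) ⊗[K] H) Finv) :
    φ.coeff 0 = 1 ∧ φ.coeff 1 = 0 ∧
    φ.coeff 2 = ((1 : K)/2) • ∑ i ∈ s, ∑ j ∈ s,
      ((⁅X i, X j⁆ ⊗ₜ[K] Y j) ⊗ₜ[K] Y i
        + (2 : K) • ((X j ⊗ₜ[K] ⁅X i, Y j⁆) ⊗ₜ[K] Y i)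
        - (X i ⊗ₜ[K] X j) ⊗ₜ[K] ⁅Y i, Y j⁆) := by
  have cF0 : F.coeff 0 = 1 := by rw [hF]; simp [coeff_one, coeff_C_mul, coeff_X, coeff_X_pow]
  have cF1 : F.coeff 1 = -G := by rw [hF]; simp [coeff_one, coeff_C_mul, coeff_X, coeff_X_pow]
  have cF2 : F.coeff 2 = ((1:K)/2) • (G*G) := by
    rw [hF]; simp [coeff_one, coeff_C_mul, coeff_X, coeff_X_pow]
  have cI0 : Finv.coeff 0 = 1 := by rw [hFinv]; simp [coeff_one, coeff_C_mul, coeff_X, coeff_X_pow]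
  have cI1 : Finv.coeff 1 = G := by rw [hFinv]; simp [coeff_one, coeff_C_mul, coeff_X, coeff_X_pow]
  have cI2 : Finv.coeff 2 = ((1:K)/2) • (G*G) := by
    rw [hFinv]; simp [coeff_one, coeff_C_mul, coeff_X, coeff_X_pow]
  set e1 := ((AlgEquiv.toAlgHom (Algebra.TensorProduct.assoc K K K H H H).symm).comp
      (Algebra.TensorProduct.includeRight (R := K) (A := H) (B := H ⊗[K] H))) with he1
  set e2 := ((AlgEquiv.toAlgHom (Algebra.TensorProduct.assoc K K K H H H).symm).comp
      (Algebra.TensorProduct.map (AlgHom.id K H) (Bialgebra.comulAlgHom K H))) with he2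
  set e3 := (Algebra.TensorProduct.map (Bialgebra.comulAlgHom K H) (AlgHom.id K H)) with he3
  set e4 := (Algebra.TensorProduct.includeLeft :
      (H ⊗[K] H) →ₐ[K] (H ⊗[K] H) ⊗[K] H) with he4
  set a := ∑ i ∈ s, (X i ⊗ₜ[K] (1:H)) ⊗ₜ[K] Y i with ha
  set b := ∑ i ∈ s, ((1:H) ⊗ₜ[K] X i) ⊗ₜ[K] Y i with hb
  set c := ∑ i ∈ s, (X i ⊗ₜ[K] Y i) ⊗ₜ[K] (1:H) with hc
  have hg1 : e1 G = b := by
    rw [hG, map_sum, hb]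
    exact Finset.sum_congr rfl fun i hi => by
      simp [he1, Algebra.TensorProduct.assoc_symm_tmul]
  have hg2 : e2 G = c + a := by
    rw [hG, map_sum, hc, ha, ← Finset.sum_add_distrib]
    exact Finset.sum_congr rfl fun i hi => by
      simp [he2, Algebra.TensorProduct.assoc_symm_tmul, Bialgebra.comulAlgHom_apply,
        hY i hi, tmul_add]
  have hg3 : e3 G = a + b := by
    rw [hG, map_sum, ha, hb, ← Finset.sum_add_distrib]
    exact Finset.sum_congr rfl fun i hi => by
      simp [he3, Bialgebra.comulAlgHom_apply, hX i hi, add_tmul]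
  have hg4 : e4 G = c := by
    rw [hG, map_sum, hc]
    exact Finset.sum_congr rfl fun i hi => by simp [he4]
  refine ⟨?_, ?_, ?_⟩
  · rw [hφ]
    simp only [Polynomial.mul_coeff_zero, coeff_map, cF0, cI0, map_one, one_mul]
  · rw [hφ]
    simp only [coeff1_mul', Polynomial.mul_coeff_zero, coeff_map, cF0, cF1, cI0, cI1,
      AlgHom.coe_toRingHom, map_one, map_neg, one_mul, mul_one, hg1, hg2, hg3, hg4]
    abel
  · rw [hφ]
    simp only [coeff2_mul', coeff1_mul', Polynomial.mul_coeff_zero, coeff_map,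
      cF0, cF1, cF2, cI0, cI1, cI2, AlgHom.coe_toRingHom, map_one, map_neg, map_smul, map_mul,
      one_mul, mul_one, hg1, hg2, hg3, hg4]
    clear_value a b c
    clear hφ φ cF0 cF1 cF2 cI0 cI1 cI2 hg1 hg2 hg3 hg4 he1 he2 he3 he4 e1 e2 e3 e4 hF hFinv F Finv hG G hX hY
    trans (((1:K)/2)•(a*c) - ((1:K)/2)•(c*a) - ((1:K)/2)•(a*b) + ((1:K)/2)•(b*a)
      + (b*c - c*b))
    · exact key_id a b c
    · have hac : a*c = ∑ i ∈ s, ∑ j ∈ s, ((X i * X j) ⊗ₜ[K] Y j) ⊗ₜ[K] Y i := by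
        rw [ha, hc, Finset.sum_mul_sum]
        simp [Algebra.TensorProduct.tmul_mul_tmul]
      have hca : c*a = ∑ i ∈ s, ∑ j ∈ s, ((X j * X i) ⊗ₜ[K] Y j) ⊗ₜ[K] Y i := by
        rw [hc, ha, Finset.sum_mul_sum]
        simp only [Algebra.TensorProduct.tmul_mul_tmul, one_mul, mul_one]
        exact Finset.sum_comm (s := s) (t := s)
          (f := fun x y => ((X x * X y) ⊗ₜ[K] Y x) ⊗ₜ[K] Y y)
      have hab : a*b = ∑ i ∈ s, ∑ j ∈ s, (X i ⊗ₜ[K] X j) ⊗ₜ[K] (Y i * Y j) := by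
        rw [ha, hb, Finset.sum_mul_sum]
        simp [Algebra.TensorProduct.tmul_mul_tmul]
      have hba : b*a = ∑ i ∈ s, ∑ j ∈ s, (X i ⊗ₜ[K] X j) ⊗ₜ[K] (Y j * Y i) := by
        rw [hb, ha, Finset.sum_mul_sum]
        simp only [Algebra.TensorProduct.tmul_mul_tmul, one_mul, mul_one]
        exact Finset.sum_comm (s := s) (t := s)
          (f := fun x y => (X y ⊗ₜ[K] X x) ⊗ₜ[K] (Y x * Y y))
      have hbc : b*c = ∑ i ∈ s, ∑ j ∈ s, (X j ⊗ₜ[K] (X i * Y j)) ⊗ₜ[K] Y i := by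
        rw [hb, hc, Finset.sum_mul_sum]
        simp [Algebra.TensorProduct.tmul_mul_tmul]
      have hcb : c*b = ∑ i ∈ s, ∑ j ∈ s, (X j ⊗ₜ[K] (Y j * X i)) ⊗ₜ[K] Y i := by
        rw [hc, hb, Finset.sum_mul_sum]
        simp only [Algebra.TensorProduct.tmul_mul_tmul, one_mul, mul_one]
        exact Finset.sum_comm (s := s) (t := s)
          (f := fun x y => (X x ⊗ₜ[K] (Y x * X y)) ⊗ₜ[K] Y y)
      rw [hac, hca, hab, hba, hbc, hcb]
      simp only [Finset.smul_sum, ← Finset.sum_sub_distrib, ← Finset.sum_add_distrib]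
      refine Finset.sum_congr rfl fun i _ => Finset.sum_congr rfl fun j _ => ?_
      simp only [Ring.lie_def, TensorProduct.sub_tmul, TensorProduct.tmul_sub,
        smul_add, smul_sub]
      match_scalars <;> norm_num
end

section
/- With t, x as in the 2×2 representation of b_+, exp(pt+qx)·exp(rt+sx) = exp((p+r)t + Q x) where Q = (p+r)·((e^{ℏp}-1)qr + e^{ℏp}(e^{ℏr}-1)ps) / ((e^{ℏ(p+r)}-1)pr), for p, r, p+r all nonzero. -/
open Matrix

lemma exp2x2 (a b : ℝ) (ha : a ≠ 0) :
    NormedSpace.exp (!![a, b; 0, -a] : Matrix (Fin 2) (Fin 2) ℝ) =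
      !![Real.exp a, b * (Real.exp a - Real.exp (-a)) / (2 * a); 0, Real.exp (-a)] := by
  set U : Matrix (Fin 2) (Fin 2) ℝ := !![1, -(b / (2 * a)); 0, 1] with hU
  have hUunit : IsUnit U := by
    rw [Matrix.isUnit_iff_isUnit_det, hU, Matrix.det_fin_two_of]
    norm_num
  have hUinv : U⁻¹ = !![1, b / (2 * a); 0, 1] := by
    apply Matrix.inv_eq_right_inv
    rw [hU, Matrix.mul_fin_two]
    ext i j
    fin_cases i <;> fin_cases j <;> simp <;> ring
  have hd : Matrix.diagonal ![a, -a] = !![a, 0; 0, -a] := by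
    ext i j; fin_cases i <;> fin_cases j <;> simp
  have key : (!![a, b; 0, -a] : Matrix (Fin 2) (Fin 2) ℝ)
      = U * Matrix.diagonal ![a, -a] * U⁻¹ := by
    rw [hd, hUinv, hU, Matrix.mul_fin_two, Matrix.mul_fin_two]
    ext i j
    fin_cases i <;> fin_cases j <;> simp <;> field_simp <;> ring
  have hconj := Matrix.exp_conj U (Matrix.diagonal ![a, -a]) hUunit
  have hexp : NormedSpace.exp (![a, -a] : Fin 2 → ℝ) = ![Real.exp a, Real.exp (-a)] := by
    funext i
    rw [Pi.exp_def]
    fin_cases i <;> simp [← Real.exp_eq_exp_ℝ]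
  have hd2 : Matrix.diagonal ![Real.exp a, Real.exp (-a)]
      = !![Real.exp a, 0; 0, Real.exp (-a)] := by
    ext i j; fin_cases i <;> fin_cases j <;> simp
  rw [key, hconj, Matrix.exp_diagonal, hexp, hd2, hUinv, hU,
    Matrix.mul_fin_two, Matrix.mul_fin_two]
  ext i j
  fin_cases i <;> fin_cases j <;> simp <;> field_simp <;> ring

/-- Closed-form Campbell-Baker-Hausdorff formula in the 2×2 representation of `b₊`:
`exp(pt+qx)·exp(rt+sx) = exp((p+r)t + Qx)` with
`Q = (p+r)((e^{ℏp}-1)qr + e^{ℏp}(e^{ℏr}-1)ps) / ((e^{ℏ(p+r)}-1)pr)`. -/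
theorem stmt14 (h p q r s : ℝ) (hh : h ≠ 0) (hp : p ≠ 0) (hr : r ≠ 0) (hpr : p + r ≠ 0) :
    let t : Matrix (Fin 2) (Fin 2) ℝ := !![h / 2, 0; 0, -(h / 2)]
    let x : Matrix (Fin 2) (Fin 2) ℝ := !![0, 1; 0, 0]
    let Q : ℝ := (p + r) * ((Real.exp (h * p) - 1) * q * r
        + Real.exp (h * p) * (Real.exp (h * r) - 1) * p * s)
      / ((Real.exp (h * (p + r)) - 1) * p * r)
    NormedSpace.exp (p • t + q • x) * NormedSpace.exp (r • t + s • x) =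
      NormedSpace.exp ((p + r) • t + Q • x) := by
  intro t x Q
  have e1 : p • t + q • x = !![h * p / 2, q; 0, -(h * p / 2)] := by
    ext i j; fin_cases i <;> fin_cases j <;> simp [t, x] <;> ring
  have e2 : r • t + s • x = !![h * r / 2, s; 0, -(h * r / 2)] := by
    ext i j; fin_cases i <;> fin_cases j <;> simp [t, x] <;> ring
  have e3 : (p + r) • t + Q • x = !![h * (p + r) / 2, Q; 0, -(h * (p + r) / 2)] := by
    ext i j; fin_cases i <;> fin_cases j <;> simp [t, x] <;> ring
  rw [e1, e2, e3, exp2x2 _ _ (by exact div_ne_zero (mul_ne_zero hh hp) two_ne_zero),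
    exp2x2 _ _ (by exact div_ne_zero (mul_ne_zero hh hr) two_ne_zero),
    exp2x2 _ _ (by exact div_ne_zero (mul_ne_zero hh hpr) two_ne_zero),
    Matrix.mul_fin_two]
  set A := Real.exp (h * p / 2) with hA
  set B := Real.exp (h * r / 2) with hB
  have hA0 : A ≠ 0 := Real.exp_ne_zero _
  have hB0 : B ≠ 0 := Real.exp_ne_zero _
  have hP : Real.exp (h * p) = A * A := by rw [hA, ← Real.exp_add]; ring_nf
  have hR : Real.exp (h * r) = B * B := by rw [hB, ← Real.exp_add]; ring_nf
  have hPR : Real.exp (h * (p + r)) = A * A * (B * B) := by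
    rw [hA, hB, ← Real.exp_add, ← Real.exp_add, ← Real.exp_add]; ring_nf
  have hPRh : Real.exp (h * (p + r) / 2) = A * B := by
    rw [hA, hB, ← Real.exp_add]; ring_nf
  have hnA : Real.exp (-(h * p / 2)) = A⁻¹ := by rw [Real.exp_neg, hA]
  have hnB : Real.exp (-(h * r / 2)) = B⁻¹ := by rw [Real.exp_neg, hB]
  have hnAB : Real.exp (-(h * (p + r) / 2)) = (A * B)⁻¹ := by
    rw [Real.exp_neg, hPRh]
  have hden : A * A * (B * B) - 1 ≠ 0 := by
    rw [← hPR]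
    intro hc
    exact mul_ne_zero hh hpr (Real.exp_injective (by rw [Real.exp_zero]; linarith))
  have hden' : A ^ 2 * B ^ 2 - 1 ≠ 0 := by
    intro hc; apply hden; linear_combination hc
  ext i j
  fin_cases i <;> fin_cases j <;>
    simp [Q, hP, hR, hPR, hPRh, hnA, hnB, hnAB] <;>
    field_simp <;> ring
end
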